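/- Let F ∈ L²(S¹) with Fourier coefficients a_k and γ_k = |a_k|², and let the partition at level j > 0 satisfy Σ_{q=1}^{Q_j} λ_{jq} ≲ 1. Then for every K ∈ ℕ, Σ_{q=1}^{Q_j} |β_{jq;sK} − β_{jq;s}|² ≤ B^j Γ(2s + 1/2, 2K²B^{-2j}) · Σ_{|k|>K} γ_k. -/

import Mathlib

noncomputable section
open MeasureTheory Real

instance : Fact (0 < 2 * Real.pi) := ⟨by positivity⟩

abbrev S1 := AddCircle (2 * Real.pi)

/-- The normalized measure `ρ(dθ) = dθ/(2π)` on the circle. -/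
def rho : Measure S1 := AddCircle.haarAddCircle

/-- The weight function `w_s(x) = x^s e^{-x}`. -/
def wgt (s : ℕ) (x : ℝ) : ℝ := x ^ s * Real.exp (-x)

/-- The Mexican needlet `ψ_{jq;s}`. -/
def needlet (B : ℝ) (s : ℕ) (j : ℤ) (lam : ℝ) (xc : S1) (θ : S1) : ℂ :=
  (Real.sqrt lam : ℂ) * ∑' k : ℤ, ((wgt s ((B ^ (-j) * (k : ℝ)) ^ 2) : ℝ) : ℂ) * fourier k (θ - xc)

/-- The truncated Mexican needlet `ψ_{jq;sK}`. -/
def needletK (B : ℝ) (s : ℕ) (j : ℤ) (K : ℕ) (lam : ℝ) (xc : S1) (θ : S1) : ℂ :=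
  (Real.sqrt lam : ℂ) *
    ∑ k ∈ Finset.Icc (-(K : ℤ)) (K : ℤ),
      ((wgt s ((B ^ (-j) * (k : ℝ)) ^ 2) : ℝ) : ℂ) * fourier k (θ - xc)

/-- The needlet coefficient `β = ⟨F, ψ⟩ = ∫ F conj(ψ) dρ`. -/
def coeff (F g : S1 → ℂ) : ℂ := ∫ θ, F θ * (starRingEnd ℂ) (g θ) ∂rho

/-- Fourier coefficient `a_k = ⟨F, u_k⟩`. -/
def fcoeff (F : S1 → ℂ) (k : ℤ) : ℂ := ∫ θ, F θ * (starRingEnd ℂ) (fourier k θ) ∂rho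

/-- Upper incomplete Gamma function `Γ(a,x) = ∫_x^∞ u^{a-1} e^{-u} du`. -/
def gammaUpper (a x : ℝ) : ℝ := ∫ u in Set.Ioi x, u ^ (a - 1) * Real.exp (-u)

/-!
Against a translated series `Σ w_k e_k(θ - x)` the coefficient of `F` is `Σ w_k e_k(x) a_k`, so the
truncation error at `(λ, x)` is `√λ` times the tail `Σ_{|k|>K} w_k e_k(x) a_k`. Cauchy–Schwarz bounds
its square by `λ · Σ_{|k|>K} w_k² · Σ_{|k|>K} γ_k`, and `Σ_q λ_{jq} ≤ 1` removes the `λ`.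

For the weights, with `c = B^{-j}` the term `w_s((ck)²)² = (ck)^{4s} e^{-2c²k²}` is compared with the
piece of the incomplete Gamma integral `∫ u^{2s-1/2} e^{-u} du` over `[2c²(k-1)², 2c²k²]`. Bounding
`e^{-u}` below by its value at the right end, that piece is at least
`e^{-2c²k²} (√2 c)^{4s+1} (k^{4s+1} - (k-1)^{4s+1}) / (2s + 1/2)`, which dominates `2c` times the term
since `k^{4s+1} - (k-1)^{4s+1} ≥ k^{4s}` and `4s + 1 ≤ √2 · 4^s`. Summing over `k > K` and over both
signs of `k` gives `c⁻¹ Γ(2s + 1/2, 2c²K²) = B^j Γ(2s + 1/2, 2K²B^{-2j})`.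
-/

open Set ComplexConjugate

lemma pow_le_pow_succ_sub_sub_one_pow_succ {t : ℝ} (ht : 1 ≤ t) (n : ℕ) :
    t ^ n ≤ t ^ (n + 1) - (t - 1) ^ (n + 1) := by
  have h : (t - 1) ^ n ≤ t ^ n := pow_le_pow_left₀ (by linarith) (by linarith) n
  rw [pow_succ, pow_succ]
  nlinarith

lemma four_mul_add_one_le_sqrt_two_mul_four_pow (s : ℕ) : (4 * s + 1 : ℝ) ≤ √2 * 4 ^ s := by
  have hsqrt : (4 / 3 : ℝ) ≤ √2 := Real.le_sqrt_of_sq_le (by norm_num)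
  have hbern : 1 + s * 3 ≤ (4 : ℝ) ^ s := by
    simpa [show (1 + 3 : ℝ) = 4 by norm_num] using
      one_add_mul_le_pow (a := (3 : ℝ)) (by norm_num) s
  nlinarith

lemma sq_rpow_natCast_div_two {t : ℝ} (ht : 0 ≤ t) (m : ℕ) :
    (t ^ 2) ^ ((m : ℝ) / 2) = t ^ m := by
  rw [← Real.rpow_natCast t 2, ← Real.rpow_mul ht, ← Real.rpow_natCast]
  congr 1
  push_cast
  ring

lemma exp_neg_mul_rpow_sub_rpow_le_integral {a b R : ℝ} (ha : 0 ≤ a) (hab : a ≤ b)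
    (hR : 0 < R) :
    exp (-b) * ((b ^ R - a ^ R) / R) ≤ ∫ u in a..b, u ^ (R - 1) * exp (-u) := by
  have hR1 : -1 < R - 1 := by linarith
  have hpow : IntervalIntegrable (fun u : ℝ => u ^ (R - 1)) volume a b :=
    intervalIntegral.intervalIntegrable_rpow' hR1
  calc exp (-b) * ((b ^ R - a ^ R) / R) = ∫ u in a..b, u ^ (R - 1) * exp (-b) := by
        rw [intervalIntegral.integral_mul_const, integral_rpow (Or.inl hR1)]
        simp [mul_comm]
    _ ≤ ∫ u in a..b, u ^ (R - 1) * exp (-u) := by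
        refine intervalIntegral.integral_mono_on hab (hpow.mul_const _)
          (hpow.mul_continuousOn (by fun_prop)) fun u hu => ?_
        gcongr
        · exact Real.rpow_nonneg (ha.trans hu.1) _
        · exact hu.2

lemma integrableOn_rpow_mul_exp_neg_Ioi {a x : ℝ} (ha : 0 < a) (hx : 0 ≤ x) :
    IntegrableOn (fun u : ℝ => u ^ (a - 1) * exp (-u)) (Ioi x) :=
  ((Real.GammaIntegral_convergent ha).mono_set (Ioi_subset_Ioi hx)).congr_fun
    (fun _ _ => mul_comm _ _) measurableSet_Ioi

lemma summable_and_tsum_le_integral_Ioi {f : ℕ → ℝ} {g : ℝ → ℝ} {a : ℕ → ℝ}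
    (hf : ∀ n, 0 ≤ f n) (ha : Monotone a) (hg : IntegrableOn g (Ioi (a 0)))
    (hg0 : ∀ u ∈ Ioi (a 0), 0 ≤ g u) (hfg : ∀ n, f n ≤ ∫ u in a n..a (n + 1), g u) :
    Summable f ∧ ∑' n, f n ≤ ∫ u in Ioi (a 0), g u := by
  have hpiece : ∀ n, IntervalIntegrable g volume (a n) (a (n + 1)) := fun n =>
    (intervalIntegrable_iff_integrableOn_Ioc_of_le (ha n.le_succ)).2 <|
      hg.mono_set fun u hu => (ha (Nat.zero_le n)).trans_lt hu.1
  have hpartial : ∀ N, ∑ n ∈ Finset.range N, f n ≤ ∫ u in Ioi (a 0), g u := fun N =>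
    calc ∑ n ∈ Finset.range N, f n ≤ ∑ n ∈ Finset.range N, ∫ u in a n..a (n + 1), g u :=
          Finset.sum_le_sum fun n _ => hfg n
      _ = ∫ u in a 0..a N, g u :=
          intervalIntegral.sum_integral_adjacent_intervals fun n _ => hpiece n
      _ = ∫ u in Ioc (a 0) (a N), g u := intervalIntegral.integral_of_le (ha (Nat.zero_le N))
      _ ≤ ∫ u in Ioi (a 0), g u :=
          setIntegral_mono_set hg ((ae_restrict_iff' measurableSet_Ioi).2 (ae_of_all _ hg0))
            Ioc_subset_Ioi_self.eventuallyLE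
  exact ⟨summable_of_sum_range_le hf hpartial, Real.tsum_le_of_sum_range_le hf hpartial⟩

lemma norm_tsum_sq_le_of_norm_le_mul {ι E : Type*} [NormedAddCommGroup E] [CompleteSpace E]
    {y : ι → E} {p q : ι → ℝ} (hp : ∀ i, 0 ≤ p i) (hq : ∀ i, 0 ≤ q i)
    (hy : ∀ i, ‖y i‖ ≤ p i * q i) (hp2 : Summable fun i => p i ^ 2)
    (hq2 : Summable fun i => q i ^ 2) :
    ‖∑' i, y i‖ ^ 2 ≤ (∑' i, p i ^ 2) * ∑' i, q i ^ 2 := by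
  obtain ⟨hpq, hle⟩ := Real.summable_and_inner_le_Lp_mul_Lq_tsum_of_nonneg
    Real.HolderConjugate.two_two hp hq (by simpa only [Real.rpow_two] using hp2)
    (by simpa only [Real.rpow_two] using hq2)
  simp only [Real.rpow_two, ← Real.sqrt_eq_rpow] at hle
  have hy' : Summable fun i => ‖y i‖ := hpq.of_nonneg_of_le (fun i => norm_nonneg _) hy
  calc ‖∑' i, y i‖ ^ 2 ≤ (∑' i, p i * q i) ^ 2 := by
        gcongr
        exact (norm_tsum_le_tsum_norm hy').trans (hy'.tsum_le_tsum hy hpq)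
    _ ≤ (√(∑' i, p i ^ 2) * √(∑' i, q i ^ 2)) ^ 2 := by
        gcongr
        exact tsum_nonneg fun i => mul_nonneg (hp i) (hq i)
    _ = (∑' i, p i ^ 2) * ∑' i, q i ^ 2 := by
        rw [mul_pow, Real.sq_sqrt (tsum_nonneg fun i => sq_nonneg _),
          Real.sq_sqrt (tsum_nonneg fun i => sq_nonneg _)]

lemma Summable.tsum_eq_sum_Icc_add_tsum_ite {E : Type*} [NormedAddCommGroup E]
    {f : ℤ → E} (hf : Summable f) (K : ℤ) :
    ∑' k, f k = ∑ k ∈ Finset.Icc (-K) K, f k + ∑' k, if K < |k| then f k else 0 := by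
  rw [← hf.sum_add_tsum_compl (s := Finset.Icc (-K) K), tsum_subtype]
  congr 2 with k
  rw [Set.indicator_apply]
  congr 1
  simp only [Finset.coe_Icc, Set.mem_compl_iff, Set.mem_Icc, lt_abs, eq_iff_iff]
  omega

lemma wgt_nonneg (s : ℕ) {x : ℝ} (hx : 0 ≤ x) : 0 ≤ wgt s x := by
  unfold wgt; positivity

lemma wgt_sq_sq (s : ℕ) (x : ℝ) :
    wgt s (x ^ 2) ^ 2 = x ^ (4 * s) * exp (-(2 * x ^ 2)) := by
  rw [wgt, mul_pow, ← Real.exp_nat_mul, ← pow_mul, ← pow_mul]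
  ring_nf

lemma summable_wgt_mul_sq (s : ℕ) {c : ℝ} (hc : 0 < c) :
    Summable fun k : ℤ => wgt s ((c * k) ^ 2) := by
  have hnat : Summable fun n : ℕ => wgt s ((c * n) ^ 2) := by
    refine ((summable_pow_mul_exp_neg_nat_mul (2 * s) (pow_pos hc 2)).mul_left
      (c ^ (2 * s))).of_nonneg_of_le (fun n => wgt_nonneg s (sq_nonneg _)) fun n => ?_
    have hn : (n : ℝ) ≤ (n : ℝ) ^ 2 := by
      rcases n.eq_zero_or_pos with rfl | hn
      · simp
      · nlinarith [(Nat.one_le_cast (α := ℝ)).2 hn]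
    calc wgt s ((c * n) ^ 2) = c ^ (2 * s) * (n ^ (2 * s) * exp (-((c * n) ^ 2))) := by
          rw [wgt]; ring
      _ ≤ c ^ (2 * s) * (n ^ (2 * s) * exp (-c ^ 2 * n)) := by
          gcongr
          nlinarith [pow_pos hc 2]
  exact .of_nat_of_neg hnat (by simpa using hnat)

lemma two_mul_mul_wgt_sq_le_integral (s : ℕ) {c t : ℝ} (hc : 0 < c) (ht : 1 ≤ t) :
    2 * c * wgt s ((c * t) ^ 2) ^ 2 ≤
      ∫ u in 2 * c ^ 2 * (t - 1) ^ 2..2 * c ^ 2 * t ^ 2,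
        u ^ ((2 * s + 1 / 2 : ℝ) - 1) * exp (-u) := by
  set R : ℝ := 2 * s + 1 / 2
  have hR0 : 0 < R := by positivity
  set d : ℝ := √2 * c
  have hd2 : d ^ 2 = 2 * c ^ 2 := by rw [mul_pow, Real.sq_sqrt zero_le_two]
  have hRpow : ∀ {τ : ℝ}, 0 ≤ τ →
      (2 * c ^ 2 * τ ^ 2) ^ R = d ^ (4 * s + 1) * τ ^ (4 * s + 1) := by
    intro τ hτ
    have hR : R = ((4 * s + 1 : ℕ) : ℝ) / 2 := by push_cast; ring
    rw [← hd2, ← mul_pow, hR, sq_rpow_natCast_div_two (by positivity), mul_pow]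
  have hdpow : 2 * c * R * c ^ (4 * s) ≤ d ^ (4 * s + 1) := by
    have hd : d ^ (4 * s + 1) = √2 * 4 ^ s * (c ^ (4 * s) * c) := by
      rw [show d ^ (4 * s + 1) = ((d ^ 2) ^ 2) ^ s * d by ring, hd2]
      ring
    rw [hd, show 2 * c * R * c ^ (4 * s) = (4 * s + 1) * (c ^ (4 * s) * c) by ring]
    gcongr
    exact four_mul_add_one_le_sqrt_two_mul_four_pow s
  calc 2 * c * wgt s ((c * t) ^ 2) ^ 2
      = exp (-(2 * c ^ 2 * t ^ 2)) * (2 * c * R * c ^ (4 * s) * t ^ (4 * s) / R) := by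
        rw [wgt_sq_sq]; field_simp; ring
    _ ≤ exp (-(2 * c ^ 2 * t ^ 2)) *
          (d ^ (4 * s + 1) * (t ^ (4 * s + 1) - (t - 1) ^ (4 * s + 1)) / R) := by
        gcongr
        exact pow_le_pow_succ_sub_sub_one_pow_succ ht _
    _ = exp (-(2 * c ^ 2 * t ^ 2)) *
          (((2 * c ^ 2 * t ^ 2) ^ R - (2 * c ^ 2 * (t - 1) ^ 2) ^ R) / R) := by
        rw [hRpow (by linarith), hRpow (by linarith)]; ring
    _ ≤ _ := exp_neg_mul_rpow_sub_rpow_le_integral (by positivity) (by gcongr; linarith) hR0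

-- The breakpoints `2 c² max(n, K)²` make the first `K` intervals empty, matching the zero terms.
lemma summable_and_tsum_tail_wgt_sq_succ_le (s K : ℕ) {c : ℝ} (hc : 0 < c) :
    Summable (fun n : ℕ => if K ≤ n then wgt s ((c * (n + 1 : ℝ)) ^ 2) ^ 2 else 0) ∧
      ∑' n : ℕ, (if K ≤ n then wgt s ((c * (n + 1 : ℝ)) ^ 2) ^ 2 else 0) ≤
        (2 * c)⁻¹ * gammaUpper (2 * s + 1 / 2) (2 * c ^ 2 * K ^ 2) := by
  set a : ℕ → ℝ := fun n => 2 * c ^ 2 * (max n K : ℕ) ^ 2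
  have ha0 : a 0 = 2 * c ^ 2 * K ^ 2 := by simp [a]
  have hfg : ∀ n, (if K ≤ n then wgt s ((c * (n + 1 : ℝ)) ^ 2) ^ 2 else 0) ≤
      ∫ u in a n..a (n + 1), (2 * c)⁻¹ * (u ^ ((2 * s + 1 / 2 : ℝ) - 1) * exp (-u)) := by
    intro n
    rw [intervalIntegral.integral_const_mul]
    rcases le_or_gt K n with h | h
    · have step := two_mul_mul_wgt_sq_le_integral s hc (t := n + 1)
        (by linarith [n.cast_nonneg (α := ℝ)])
      simp only [a, if_pos h, max_eq_left h, max_eq_left (h.trans n.le_succ)]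
      rw [le_inv_mul_iff₀ (by positivity)]
      push_cast
      simpa using step
    · simp only [a, if_neg h.not_ge, max_eq_right h.le, max_eq_right (Nat.succ_le_of_lt h)]
      simp
  have h := summable_and_tsum_le_integral_Ioi (fun n => by positivity)
    (fun m n hmn => by simp only [a]; gcongr)
    ((integrableOn_rpow_mul_exp_neg_Ioi (by positivity) (by positivity)).const_mul _)
    (fun u hu => by have : 0 ≤ u := (by positivity : 0 ≤ a 0).trans hu.le; positivity) hfg
  rwa [integral_const_mul, ha0] at h

lemma summable_and_tsum_tail_wgt_sq_le (s K : ℕ) {c : ℝ} (hc : 0 < c) :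
    Summable (fun k : ℤ => if (K : ℤ) < |k| then wgt s ((c * k) ^ 2) ^ 2 else 0) ∧
      ∑' k : ℤ, (if (K : ℤ) < |k| then wgt s ((c * k) ^ 2) ^ 2 else 0) ≤
        c⁻¹ * gammaUpper (2 * s + 1 / 2) (2 * c ^ 2 * K ^ 2) := by
  set G : ℤ → ℝ := fun k => if (K : ℤ) < |k| then wgt s ((c * k) ^ 2) ^ 2 else 0
  set f : ℕ → ℝ := fun n => if K ≤ n then wgt s ((c * (n + 1 : ℝ)) ^ 2) ^ 2 else 0
  obtain ⟨hf, hfle⟩ := summable_and_tsum_tail_wgt_sq_succ_le s K hc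
  have hGpos : ∀ n : ℕ, G (n + 1) = f n := by
    intro n
    have habs : |(n : ℤ) + 1| = n + 1 := abs_of_nonneg (by positivity)
    simp only [G, f, habs, Int.lt_add_one_iff, Nat.cast_le]
    push_cast
    rfl
  have hGneg : ∀ n : ℕ, G (-(n + 1)) = f n := by
    intro n
    rw [← hGpos]
    simp only [G, abs_neg]
    push_cast
    ring_nf
  have hG0 : G 0 = 0 := by simp [G]
  have hG : HasSum G (∑' n, f n + ∑' n, f n) := by
    refine HasSum.of_nat_of_neg_add_one ?_ ?_
    · rw [← hasSum_nat_add_iff' 1]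
      simpa [hG0, hGpos] using hf.hasSum
    · simpa only [hGneg] using hf.hasSum
  refine ⟨hG.summable, ?_⟩
  rw [hG.tsum_eq, mul_inv] at *
  linarith

instance : IsProbabilityMeasure rho :=
  inferInstanceAs (IsProbabilityMeasure AddCircle.haarAddCircle)

lemma fourier_sub_apply {T : ℝ} (k : ℤ) (θ x : AddCircle T) :
    fourier k (θ - x) = fourier k θ * conj (fourier k x) := by
  simp [sub_eq_add_neg, AddCircle.toCircle_add]

lemma norm_fourier_apply {T : ℝ} (k : ℤ) (θ : AddCircle T) : ‖fourier k θ‖ = 1 :=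
  Circle.norm_coe _

lemma norm_fcoeff_le (F : S1 → ℂ) (k : ℤ) : ‖fcoeff F k‖ ≤ ∫ θ, ‖F θ‖ ∂rho :=
  (norm_integral_le_integral_norm _).trans_eq <| by simp [Circle.norm_coe]

lemma summable_norm_fcoeff_sq {F : S1 → ℂ} (hF : MemLp F 2 rho) :
    Summable fun k => ‖fcoeff F k‖ ^ 2 := by
  have hF' : MemLp F 2 AddCircle.haarAddCircle := hF
  refine (hasSum_sq_fourierCoeff (hF'.toLp F)).summable.congr fun k => ?_
  rw [fourierCoeff_congr_ae hF'.coeFn_toLp]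
  simp [fcoeff, fourierCoeff, mul_comm, rho]

lemma coeff_const_mul (F g : S1 → ℂ) (c : ℂ) :
    coeff F (fun θ => c * g θ) = conj c * coeff F g := by
  simp only [coeff, map_mul, ← integral_const_mul]
  congr with θ
  ring

lemma integral_mul_conj_mul_fourier_sub (F : S1 → ℂ) (v : ℂ) (k : ℤ) (x : S1) :
    ∫ θ, F θ * conj (v * fourier k (θ - x)) ∂rho = conj v * fourier k x * fcoeff F k := by
  simp only [fcoeff, fourier_sub_apply, map_mul, Complex.conj_conj, ← integral_const_mul]
  congr with θ
  ring

lemma integrable_mul_conj_mul_fourier_sub {F : S1 → ℂ} (hF : Integrable F rho) (v : ℂ)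
    (k : ℤ) (x : S1) : Integrable (fun θ => F θ * conj (v * fourier k (θ - x))) rho :=
  hF.mul_bdd (c := ‖v‖) (by fun_prop)
    (ae_of_all _ fun θ => by simp [Circle.norm_coe])

lemma coeff_tsum_mul_fourier_sub {F : S1 → ℂ} (hF : Integrable F rho) {v : ℤ → ℂ}
    (hv : Summable fun k => ‖v k‖) (x : S1) :
    coeff F (fun θ => ∑' k, v k * fourier k (θ - x)) =
      ∑' k, conj (v k) * fourier k x * fcoeff F k := by
  have hnorm : ∀ k, ∫ θ, ‖F θ * conj (v k * fourier k (θ - x))‖ ∂rho =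
      ‖v k‖ * ∫ θ, ‖F θ‖ ∂rho := fun k => by
    rw [← integral_const_mul]
    congr with θ
    simp [Circle.norm_coe, mul_comm]
  simp_rw [← integral_mul_conj_mul_fourier_sub]
  rw [integral_tsum_of_summable_integral_norm
    (fun k => integrable_mul_conj_mul_fourier_sub hF (v k) k x)
    ((hv.mul_right _).congr fun k => (hnorm k).symm), coeff]
  simp_rw [Complex.conj_tsum, tsum_mul_left]

lemma coeff_sum_mul_fourier_sub {F : S1 → ℂ} (hF : Integrable F rho) (v : ℤ → ℂ)
    (S : Finset ℤ) (x : S1) :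
    coeff F (fun θ => ∑ k ∈ S, v k * fourier k (θ - x)) =
      ∑ k ∈ S, conj (v k) * fourier k x * fcoeff F k := by
  simp_rw [coeff, map_sum, Finset.mul_sum]
  rw [integral_finsetSum _ fun k _ => integrable_mul_conj_mul_fourier_sub hF (v k) k x]
  simp_rw [integral_mul_conj_mul_fourier_sub]

lemma coeff_truncation_sub_eq {F : S1 → ℂ} (hF : Integrable F rho) {w : ℤ → ℝ}
    (hw0 : ∀ k, 0 ≤ w k) (hw : Summable w) (K : ℤ) (l : ℝ) (x : S1) :
    coeff F (fun θ => (√l : ℂ) *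
          ∑ k ∈ Finset.Icc (-K) K, (w k : ℂ) * fourier k (θ - x)) -
        coeff F (fun θ => (√l : ℂ) * ∑' k, (w k : ℂ) * fourier k (θ - x)) =
      -((√l : ℂ) * ∑' k, if K < |k| then (w k : ℂ) * fourier k x * fcoeff F k else 0) := by
  have hnw : ∀ k, ‖(w k : ℂ)‖ = w k := fun k => by simp [abs_of_nonneg (hw0 k)]
  have hy : Summable fun k => (w k : ℂ) * fourier k x * fcoeff F k := by
    refine Summable.of_norm ((hw.mul_right (∫ θ, ‖F θ‖ ∂rho)).of_nonneg_of_le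
      (fun k => norm_nonneg _) fun k => ?_)
    rw [norm_mul, norm_mul, hnw, norm_fourier_apply, mul_one]
    exact mul_le_mul_of_nonneg_left (norm_fcoeff_le F k) (hw0 k)
  rw [coeff_const_mul, coeff_const_mul, coeff_sum_mul_fourier_sub hF,
    coeff_tsum_mul_fourier_sub hF (by simpa only [hnw] using hw)]
  simp only [Complex.conj_ofReal]
  rw [hy.tsum_eq_sum_Icc_add_tsum_ite K]
  ring

lemma norm_coeff_truncation_sub_sq_le {F : S1 → ℂ} (hF : MemLp F 2 rho) {w : ℤ → ℝ}
    (hw0 : ∀ k, 0 ≤ w k) (hw : Summable w) (K : ℤ)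
    (hw2 : Summable fun k : ℤ => if K < |k| then w k ^ 2 else 0) {l : ℝ} (hl : 0 ≤ l)
    (x : S1) :
    ‖coeff F (fun θ => (√l : ℂ) *
          ∑ k ∈ Finset.Icc (-K) K, (w k : ℂ) * fourier k (θ - x)) -
        coeff F (fun θ => (√l : ℂ) * ∑' k, (w k : ℂ) * fourier k (θ - x))‖ ^ 2 ≤
      l * ((∑' k : ℤ, if K < |k| then w k ^ 2 else 0) *
        ∑' k : ℤ, if K < |k| then ‖fcoeff F k‖ ^ 2 else 0) := by
  rw [coeff_truncation_sub_eq (hF.integrable one_le_two) hw0 hw, norm_neg, norm_mul, mul_pow,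
    Complex.norm_real, Real.norm_of_nonneg (Real.sqrt_nonneg l), Real.sq_sqrt hl]
  gcongr
  have hsq : ∀ (P : Prop) [Decidable P] (r : ℝ),
      (if P then r else 0) ^ 2 = if P then r ^ 2 else 0 := fun P _ r => by split_ifs <;> simp
  have hF2 : Summable fun k : ℤ => if K < |k| then ‖fcoeff F k‖ ^ 2 else 0 :=
    (summable_norm_fcoeff_sq hF).of_nonneg_of_le (fun k => by split_ifs <;> positivity)
      fun k => by split_ifs <;> simp
  simp_rw [← hsq]
  refine norm_tsum_sq_le_of_norm_le_mul (fun k => ?_) (fun k => ?_) (fun k => ?_)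
    (by simpa only [hsq] using hw2) (by simpa only [hsq] using hF2)
  · split_ifs <;> simp [hw0]
  · split_ifs <;> simp
  · split_ifs <;> simp [abs_of_nonneg (hw0 k), Circle.norm_coe]

theorem coeff_truncation_error (s : ℕ) (B : ℝ) (hB : 1 < B)
    (F : S1 → ℂ) (hF : MemLp F 2 rho)
    (j : ℤ) (Q : ℕ) (lam : ℕ → ℝ) (xc : ℕ → S1)
    (hlam0 : ∀ q < Q, 0 ≤ lam q)
    (hlamsum : ∑ q ∈ Finset.range Q, lam q ≤ 1) (K : ℕ) :
    ∑ q ∈ Finset.range Q,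
        ‖coeff F (needletK B s j K (lam q) (xc q)) - coeff F (needlet B s j (lam q) (xc q))‖ ^ 2 ≤
      B ^ j * gammaUpper (2 * s + 1 / 2) (2 * (K : ℝ) ^ 2 * B ^ (-2 * j)) *
        ∑' k : ℤ, if (K : ℤ) < |k| then ‖fcoeff F k‖ ^ 2 else 0 := by
  have hB0 : 0 < B := by linarith
  have hc : 0 < B ^ (-j) := zpow_pos hB0 _
  set A := ∑' k : ℤ, if (K : ℤ) < |k| then wgt s ((B ^ (-j) * k) ^ 2) ^ 2 else 0
  set G := ∑' k : ℤ, if (K : ℤ) < |k| then ‖fcoeff F k‖ ^ 2 else 0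
  obtain ⟨hAsum, hA⟩ := summable_and_tsum_tail_wgt_sq_le s K hc
  have hAG : 0 ≤ A * G := mul_nonneg (tsum_nonneg fun k => by positivity)
    (tsum_nonneg fun k => by positivity)
  have hinv : (B ^ (-j))⁻¹ = B ^ j := by rw [zpow_neg, inv_inv]
  have hsq : 2 * (B ^ (-j)) ^ 2 * (K : ℝ) ^ 2 = 2 * (K : ℝ) ^ 2 * B ^ (-2 * j) := by
    rw [← zpow_natCast, ← zpow_mul]
    ring_nf
  calc _ ≤ ∑ q ∈ Finset.range Q, lam q * (A * G) := Finset.sum_le_sum fun q hq =>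
        norm_coeff_truncation_sub_sq_le hF (fun k => wgt_nonneg s (sq_nonneg _))
          (summable_wgt_mul_sq s hc) K hAsum (hlam0 q (Finset.mem_range.1 hq)) (xc q)
    _ = (∑ q ∈ Finset.range Q, lam q) * (A * G) := (Finset.sum_mul ..).symm
    _ ≤ A * G := mul_le_of_le_one_left hAG hlamsum
    _ ≤ _ := by
        rw [← hinv, ← hsq]
        exact mul_le_mul_of_nonneg_right hA (tsum_nonneg fun k => by positivity)
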